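/- Define Φ : {(x, y, z, q) ∈ ℝ⁴ : x > 0} → ℂ² by Φ(x, y, z, q) = (z₁, z₂) with z₂ = (y + iz)/2 and z₁ = ½x² + (y² + z²)/4 + iq. Then Φ is a smooth diffeomorphism onto U' = {(z₁, z₂) ∈ ℂ² : z₁ + z̄₁ − 2z₂z̄₂ > 0}, and the pullback under Φ of the metric g = (v − 2z₂z̄₂)^{−1/2}(dz₁ − 2z̄₂dz₂)(dz̄₁ − 2z₂dz̄₂) + 4(v − 2z₂z̄₂)^{1/2} dz₂ dz̄₂ equals the Gibbons–Hawking form x(dx² + dy² + dz²) + (1/x)(½z dy − ½y dz + dq)². -/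

import Mathlib

noncomputable section

/-- `w(z₁,z₂) = v − 2z₂z̄₂` where `v = z₁ + z̄₁ = 2 Re z₁`. -/
def wDef (p : ℂ × ℂ) : ℝ := 2 * p.1.re - 2 * Complex.normSq p.2

/-- The region `U' = {(z₁,z₂) ∈ ℂ² : v − 2z₂z̄₂ > 0}`. -/
def Uprime : Set (ℂ × ℂ) := {p | 0 < wDef p}

/-- `K = log(v − 2z₂z̄₂)`. -/
def KDef (p : ℂ × ℂ) : ℝ := Real.log (wDef p)

/-- `K` as a function of `v` at fixed `z₂`. -/
def KofV (z₂ : ℂ) (v : ℝ) : ℝ := Real.log (v - 2 * Complex.normSq z₂)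

/-- `K_v = ∂K/∂v`. -/
def Kv (p : ℂ × ℂ) : ℝ := deriv (KofV p.2) (2 * p.1.re)

/-- `K_vv = ∂²K/∂v²`. -/
def Kvv (p : ℂ × ℂ) : ℝ := deriv (deriv (KofV p.2)) (2 * p.1.re)

/-- The Wirtinger derivative `∂G/∂z = ½(∂_x G − i ∂_y G)` of `G : ℂ → ℂ` at `c`. -/
def wirtD (G : ℂ → ℂ) (c : ℂ) : ℂ :=
  (deriv (fun x : ℝ => G ((x : ℂ) + (c.im : ℂ) * Complex.I)) c.re -
    Complex.I * deriv (fun y : ℝ => G ((c.re : ℂ) + (y : ℂ) * Complex.I)) c.im) / 2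

/-- The Wirtinger derivative `∂G/∂z̄ = ½(∂_x G + i ∂_y G)` of `G : ℂ → ℂ` at `c`. -/
def wirtDbar (G : ℂ → ℂ) (c : ℂ) : ℂ :=
  (deriv (fun x : ℝ => G ((x : ℂ) + (c.im : ℂ) * Complex.I)) c.re +
    Complex.I * deriv (fun y : ℝ => G ((c.re : ℂ) + (y : ℂ) * Complex.I)) c.im) / 2

/-- `K_{v2} = ∂²K/∂v∂z₂` (Wirtinger derivative in `z₂` of `K_v`). -/
def Kv2 (p : ℂ × ℂ) : ℂ :=
  wirtD (fun z₂ => ((deriv (KofV z₂) (2 * p.1.re) : ℝ) : ℂ)) p.2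

/-- `K_{v2̄} = ∂²K/∂v∂z̄₂`. -/
def Kv2bar (p : ℂ × ℂ) : ℂ :=
  wirtDbar (fun z₂ => ((deriv (KofV z₂) (2 * p.1.re) : ℝ) : ℂ)) p.2

/-- `K_{22̄} = ∂²K/∂z₂∂z̄₂` (at fixed `v`). -/
def K22bar (p : ℂ × ℂ) : ℂ :=
  wirtDbar (fun z₂ =>
    wirtD (fun u => ((Real.log (2 * p.1.re - 2 * Complex.normSq u) : ℝ) : ℂ)) z₂) p.2

/-- The 1-form `dz₁ − 2z̄₂dz₂` evaluated on a real tangent vector `X ∈ ℂ² ≅ ℝ⁴`. -/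
def AForm (p : ℂ × ℂ) (X : ℂ × ℂ) : ℂ := X.1 - 2 * starRingEnd ℂ p.2 * X.2

/-- The explicit Ricci-flat metric
`g = (v − 2z₂z̄₂)^{−1/2}(dz₁ − 2z̄₂dz₂)(dz̄₁ − 2z₂dz̄₂) + 4(v − 2z₂z̄₂)^{1/2} dz₂ dz̄₂`
(with `2αβ = α⊗β + β⊗α`) on real tangent vectors. -/
def gExpl (p : ℂ × ℂ) (X Y : ℂ × ℂ) : ℝ :=
  1 / Real.sqrt (wDef p) * (AForm p X * starRingEnd ℂ (AForm p Y)).re +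
    4 * Real.sqrt (wDef p) * (X.2 * starRingEnd ℂ Y.2).re

/-- The almost complex structure
`J⁺_{e^{iφ}} = 2Re{ i e^{iφ} [ (2(v − 2z₂z̄₂)^{1/2})^{−1}(dz₁ − 2z̄₂dz₂) ⊗ (∂_{z̄₂} + 2z₂∂_{z̄₁}) − 2(v − 2z₂z̄₂)^{1/2} dz₂ ⊗ ∂_{z̄₁} ] }`
as a real endomorphism of the tangent space `ℂ² ≅ ℝ⁴`: a real tangent vector `X`
corresponds to `X.1 ∂_{z₁} + conj X.1 ∂_{z̄₁} + X.2 ∂_{z₂} + conj X.2 ∂_{z̄₂}` in the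
complexified tangent space; the components below are the `∂_{z₁}`- and
`∂_{z₂}`-coefficients of `(T + T̄)(X)`. -/
def JExpl (φ : ℝ) (p : ℂ × ℂ) (X : ℂ × ℂ) : ℂ × ℂ :=
  (starRingEnd ℂ (Complex.I * Complex.exp ((φ : ℂ) * Complex.I) *
      (AForm p X / (2 * (Real.sqrt (wDef p) : ℂ)) * (2 * p.2) -
        2 * (Real.sqrt (wDef p) : ℂ) * X.2)),
   starRingEnd ℂ (Complex.I * Complex.exp ((φ : ℂ) * Complex.I) *
      (AForm p X / (2 * (Real.sqrt (wDef p) : ℂ)))))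

/-- The coordinate transformation `Φ(x,y,z,q) = (½x² + (y²+z²)/4 + iq, (y+iz)/2)`,
so that `x = (v − 2z₂z̄₂)^{1/2}`, `y = z₂ + z̄₂`, `z = i(z̄₂ − z₂)`, `q = (z₁−z̄₁)/(2i)`. -/
def PhiGH (p : ℝ × ℝ × ℝ × ℝ) : ℂ × ℂ :=
  (((p.1 ^ 2 / 2 + (p.2.1 ^ 2 + p.2.2.1 ^ 2) / 4 : ℝ) : ℂ) +
      ((p.2.2.2 : ℝ) : ℂ) * Complex.I,
   (((p.2.1 : ℝ) : ℂ) + ((p.2.2.1 : ℝ) : ℂ) * Complex.I) / 2)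

/-- The half-space `{x > 0}` in the `(x,y,z,q)`-coordinates. -/
def halfSpace : Set (ℝ × ℝ × ℝ × ℝ) := {p | 0 < p.1}

/-!
Along `Φ` the potential `w = v − 2|z₂|²` becomes `x²`, so `Φ` is inverted on `U'` by
`Ψ(z₁, z₂) = (√w, 2 Re z₂, 2 Im z₂, Im z₁)`. For the metric, differentiating `Φ` gives
`dz₂ = ½(dy + i dz)` and `dz₁ − 2z̄₂ dz₂ = x dx + i(½z dy − ½y dz + dq)`; hence
`x⁻¹|dz₁ − 2z̄₂ dz₂|² = x dx² + x⁻¹(½z dy − ½y dz + dq)²` and `4x|dz₂|² = x(dy² + dz²)`.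
-/

namespace Complex

@[fun_prop]
theorem contDiff_ofReal {n : WithTop ℕ∞} : ContDiff ℝ n ((↑) : ℝ → ℂ) := ofRealCLM.contDiff

@[fun_prop]
theorem contDiff_re {n : WithTop ℕ∞} : ContDiff ℝ n re := reCLM.contDiff

@[fun_prop]
theorem contDiff_im {n : WithTop ℕ∞} : ContDiff ℝ n im := imCLM.contDiff

end Complex

theorem HasFDerivAt.ofReal_comp {E : Type*} [NormedAddCommGroup E] [NormedSpace ℝ E] {f : E → ℝ}
    {f' : E →L[ℝ] ℝ} {x : E} (hf : HasFDerivAt f f' x) :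
    HasFDerivAt (fun y => (f y : ℂ)) (Complex.ofRealCLM.comp f') x :=
  Complex.ofRealCLM.hasFDerivAt.comp x hf

theorem PhiGH_apply (p : ℝ × ℝ × ℝ × ℝ) :
    PhiGH p = (⟨p.1 ^ 2 / 2 + (p.2.1 ^ 2 + p.2.2.1 ^ 2) / 4, p.2.2.2⟩, ⟨p.2.1 / 2, p.2.2.1 / 2⟩) := by
  simp [PhiGH, Prod.ext_iff, Complex.ext_iff, -Complex.ofReal_pow]

theorem wDef_PhiGH (p : ℝ × ℝ × ℝ × ℝ) : wDef (PhiGH p) = p.1 ^ 2 := by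
  simp only [wDef, PhiGH_apply, Complex.normSq_mk]
  ring

theorem sqrt_wDef_PhiGH {p : ℝ × ℝ × ℝ × ℝ} (hp : p ∈ halfSpace) :
    √(wDef (PhiGH p)) = p.1 := by
  rw [wDef_PhiGH, Real.sqrt_sq (le_of_lt hp)]

theorem contDiff_wDef {n : WithTop ℕ∞} : ContDiff ℝ n wDef := by
  unfold wDef
  simp only [Complex.normSq_apply]
  fun_prop

theorem contDiff_PhiGH {n : WithTop ℕ∞} : ContDiff ℝ n PhiGH := by
  unfold PhiGH
  fun_prop

theorem fderiv_PhiGH_apply (p X : ℝ × ℝ × ℝ × ℝ) :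
    fderiv ℝ PhiGH p X =
      (⟨p.1 * X.1 + (p.2.1 * X.2.1 + p.2.2.1 * X.2.2.1) / 2, X.2.2.2⟩, ⟨X.2.1 / 2, X.2.2.1 / 2⟩) := by
  have hx : HasFDerivAt (fun p : ℝ × ℝ × ℝ × ℝ => p.1) _ p := hasFDerivAt_fst (𝕜 := ℝ)
  have h₂ : HasFDerivAt (fun p : ℝ × ℝ × ℝ × ℝ => p.2) _ p := hasFDerivAt_snd (𝕜 := ℝ)
  have h₃ : HasFDerivAt (fun p : ℝ × ℝ × ℝ × ℝ => p.2.2) _ p := h₂.snd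
  have hy := h₂.fst
  have hz := h₃.fst
  have hq := h₃.snd
  -- `mul_const 2⁻¹` and `mul_const 4⁻¹` match the divisions in `PhiGH` definitionally.
  have hΦ : HasFDerivAt PhiGH _ p :=
    ((((hx.pow 2).mul_const 2⁻¹).add (((hy.pow 2).add (hz.pow 2)).mul_const 4⁻¹)).ofReal_comp.add
      (hq.ofReal_comp.mul_const Complex.I)).prodMk
      ((hy.ofReal_comp.add (hz.ofReal_comp.mul_const Complex.I)).mul_const 2⁻¹)
  rw [hΦ.fderiv]
  refine Prod.ext (Complex.ext ?_ ?_) (Complex.ext ?_ ?_) <;> simp <;> ring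

theorem AForm_PhiGH_fderiv (p X : ℝ × ℝ × ℝ × ℝ) :
    AForm (PhiGH p) (fderiv ℝ PhiGH p X) =
      ⟨p.1 * X.1, p.2.2.1 / 2 * X.2.1 - p.2.1 / 2 * X.2.2.1 + X.2.2.2⟩ := by
  apply Complex.ext <;> simp [AForm, PhiGH_apply, fderiv_PhiGH_apply] <;> ring

def PsiGH (q : ℂ × ℂ) : ℝ × ℝ × ℝ × ℝ :=
  (√(wDef q), 2 * q.2.re, 2 * q.2.im, q.1.im)

theorem contDiffOn_PsiGH {n : WithTop ℕ∞} : ContDiffOn ℝ n PsiGH Uprime := by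
  intro q hq
  have hsqrt : ContDiffAt ℝ n (fun q => √(wDef q)) q :=
    (Real.contDiffAt_sqrt (ne_of_gt hq)).comp q contDiff_wDef.contDiffAt
  unfold PsiGH
  exact (hsqrt.prodMk (by fun_prop)).contDiffWithinAt

theorem PsiGH_PhiGH {p : ℝ × ℝ × ℝ × ℝ} (hp : p ∈ halfSpace) : PsiGH (PhiGH p) = p := by
  rw [PsiGH, sqrt_wDef_PhiGH hp]
  ext <;> simp [PhiGH_apply, mul_div_cancel₀]

theorem PhiGH_PsiGH {q : ℂ × ℂ} (hq : q ∈ Uprime) : PhiGH (PsiGH q) = q := by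
  rw [PhiGH_apply, PsiGH, Real.sq_sqrt (le_of_lt hq)]
  refine Prod.ext (Complex.ext ?_ rfl) (Complex.ext ?_ ?_)
  · simp only [wDef, Complex.normSq_apply]
    ring
  all_goals simp

theorem mapsTo_PhiGH : Set.MapsTo PhiGH halfSpace Uprime := fun p hp => by
  simpa [Uprime, wDef_PhiGH] using pow_pos hp 2

theorem mapsTo_PsiGH : Set.MapsTo PsiGH Uprime halfSpace := fun _ hq => Real.sqrt_pos.mpr hq

theorem gExpl_PhiGH_fderiv {p : ℝ × ℝ × ℝ × ℝ} (hp : p ∈ halfSpace) (X Y : ℝ × ℝ × ℝ × ℝ) :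
    gExpl (PhiGH p) (fderiv ℝ PhiGH p X) (fderiv ℝ PhiGH p Y) =
      p.1 * (X.1 * Y.1 + X.2.1 * Y.2.1 + X.2.2.1 * Y.2.2.1) +
        1 / p.1 *
          ((p.2.2.1 / 2 * X.2.1 - p.2.1 / 2 * X.2.2.1 + X.2.2.2) *
            (p.2.2.1 / 2 * Y.2.1 - p.2.1 / 2 * Y.2.2.1 + Y.2.2.2)) := by
  have hx : p.1 ≠ 0 := ne_of_gt hp
  rw [gExpl, AForm_PhiGH_fderiv, AForm_PhiGH_fderiv, sqrt_wDef_PhiGH hp]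
  simp only [fderiv_PhiGH_apply, Complex.mul_re, Complex.conj_re, Complex.conj_im]
  field_simp
  ring

/-- `Φ` is a smooth diffeomorphism from `{x > 0}` onto `U'`, and the
pullback of the explicit metric `g` under `Φ` is the Gibbons–Hawking metric
`x(dx² + dy² + dz²) + (1/x)(½z dy − ½y dz + dq)²`. -/
theorem PhiGH_diffeo_pullback :
    ContDiff ℝ (⊤ : ℕ∞) PhiGH ∧
    Set.BijOn PhiGH halfSpace Uprime ∧
    (∃ Ψ : ℂ × ℂ → ℝ × ℝ × ℝ × ℝ, ContDiffOn ℝ (⊤ : ℕ∞) Ψ Uprime ∧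
      (∀ p ∈ halfSpace, Ψ (PhiGH p) = p) ∧ (∀ q ∈ Uprime, PhiGH (Ψ q) = q)) ∧
    (∀ p ∈ halfSpace, ∀ X Y : ℝ × ℝ × ℝ × ℝ,
      gExpl (PhiGH p) (fderiv ℝ PhiGH p X) (fderiv ℝ PhiGH p Y) =
        p.1 * (X.1 * Y.1 + X.2.1 * Y.2.1 + X.2.2.1 * Y.2.2.1) +
          1 / p.1 *
            ((p.2.2.1 / 2 * X.2.1 - p.2.1 / 2 * X.2.2.1 + X.2.2.2) *
              (p.2.2.1 / 2 * Y.2.1 - p.2.1 / 2 * Y.2.2.1 + Y.2.2.2))) :=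
  ⟨contDiff_PhiGH,
    Set.InvOn.bijOn ⟨fun _ => PsiGH_PhiGH, fun _ => PhiGH_PsiGH⟩ mapsTo_PhiGH mapsTo_PsiGH,
    ⟨PsiGH, contDiffOn_PsiGH, fun _ => PsiGH_PhiGH, fun _ => PhiGH_PsiGH⟩,
    fun _ hp => gExpl_PhiGH_fderiv hp⟩
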